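/- arXiv:math-ph/0406042 — 2 statements merged into one kernel-verified Lean document; each statement's English description precedes it below -/
import Mathlib

section
/- The Jacobi triple product identity holds: \sum_{k \in \mathbb{Z}} (-1)^k q^{k^2/2} x^k = (q;q)_\infty \, (x^{-1} q^{1/2}; q)_\infty \, (x q^{1/2}; q)_\infty, as an identity of formal Laurent series (equivalently, after replacing q^{1/2} by a formal variable). -/
noncomputable section

instance : TopologicalSpace (LaurentPolynomial ℚ) := ⊥

/-- The product (coefficientwise) topology on formal power series. -/
instance powerSeriesTopology {R : Type*} [Semiring R] [TopologicalSpace R] :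
    TopologicalSpace (PowerSeries R) :=
  TopologicalSpace.induced (fun f (n : ℕ) => (PowerSeries.coeff n) f) Pi.topologicalSpace

/-- Formal power series in `t` whose coefficients are Laurent polynomials in `x`:
the natural home of both sides of the Jacobi triple product after `q = t^2`. -/
abbrev RJ : Type := PowerSeries (LaurentPolynomial ℚ)

/-- The monomial `x^n` (`n : ℤ`), viewed as a constant (in `t`) series. -/
def Xm (n : ℤ) : RJ := PowerSeries.C (LaurentPolynomial.T n)

/-!
Cauchy's finite form of the identity,
`∏_{j<m} (1 + z⁻¹ t^(2j+1)) (1 + z t^(2j+1)) = ∑_{|k| ≤ m} z^k t^(k²) [2m, m+k]_{t²}`,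
holds in any commutative ring with a unit `z`: both sides satisfy the same recurrence in `m`,
by the two `q`-Pascal rules. Since `(q;q)_m [2m, m-|k|]_q` is a product of factors `1 - q^e` with
`e > m - |k|`, multiplying by `(t²;t²)_m` turns the right side into the partial theta sum
`∑_{|k| ≤ m} z^k t^(k²)` up to an error divisible by `t^(2m+1)`. In power series with `t = X`
the partial sums and products converge coefficientwise, so the identity holds in the limit;
the theorem is the case `z = -x`.
-/

open Finset

section QBinomial

variable {A : Type*} [CommRing A] (q : A)

/-- Gaussian binomial coefficients `[n, k]_q`, indexed by `k : ℤ` so that they vanish outside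
`0 ≤ k ≤ n`; the truncation in `k.toNat` only matters where the coefficient is zero anyway. -/
def qBinomial : ℕ → ℤ → A
  | 0, k => if k = 0 then 1 else 0
  | n + 1, k => qBinomial n (k - 1) + q ^ k.toNat * qBinomial n k

def qPochhammer (m : ℕ) : A := ∏ i ∈ range m, (1 - q ^ (i + 1))

theorem qBinomial_succ (n : ℕ) (k : ℤ) :
    qBinomial q (n + 1) k = qBinomial q n (k - 1) + q ^ k.toNat * qBinomial q n k :=
  rfl

theorem qBinomial_eq_zero {n : ℕ} {k : ℤ} (h : k < 0 ∨ n < k) : qBinomial q n k = 0 := by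
  induction n generalizing k with
  | zero => simp only [qBinomial, ite_eq_right_iff]; omega
  | succ n ih => rw [qBinomial_succ, ih (by omega), ih (by omega), mul_zero, add_zero]

theorem qBinomial_zero_right (n : ℕ) : qBinomial q n 0 = 1 := by
  induction n with
  | zero => rfl
  | succ n ih => rw [qBinomial_succ, qBinomial_eq_zero q (by omega), ih]; simp

theorem pow_toNat_mul_pow_toNat_mul_qBinomial {n : ℕ} {j a b : ℤ} (hab : a + b = n + 1)
    (h : 0 ≤ j → j ≤ n → 0 ≤ a ∧ 0 ≤ b) :
    q ^ a.toNat * q ^ b.toNat * qBinomial q n j = q ^ (n + 1) * qBinomial q n j := by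
  by_cases hj : 0 ≤ j ∧ j ≤ n
  · rw [← pow_add]; congr 2; omega
  · rw [qBinomial_eq_zero q (by omega), mul_zero, mul_zero]

theorem qBinomial_succ' (n : ℕ) (k : ℤ) :
    qBinomial q (n + 1) k
      = q ^ ((n : ℤ) + 1 - k).toNat * qBinomial q n (k - 1) + qBinomial q n k := by
  induction n generalizing k with
  | zero =>
    by_cases h0 : k = 0
    · subst h0; simp [qBinomial]
    by_cases h1 : k = 1
    · subst h1; simp [qBinomial]
    · simp [qBinomial, h0, h1, sub_eq_zero]
  | succ n ih =>
    have e1 := pow_toNat_mul_pow_toNat_mul_qBinomial q (n := n) (j := k - 1) (a := k)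
      (b := n + 1 - k) (by ring) (by omega)
    have e2 := pow_toNat_mul_pow_toNat_mul_qBinomial q (n := n) (j := k - 1) (a := n + 2 - k)
      (b := k - 1) (by ring) (by omega)
    have h1 := ih (k - 1)
    have d1 := qBinomial_succ q n (k - 1)
    rw [show (n : ℤ) + 1 - (k - 1) = n + 2 - k by ring] at h1
    rw [show k - 1 - 1 = k - 2 by ring] at h1 d1
    rw [qBinomial_succ q (n + 1) k]
    push_cast
    rw [show (n : ℤ) + 1 + 1 - k = n + 2 - k by ring]
    linear_combination h1 - q ^ ((n : ℤ) + 2 - k).toNat * d1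
      + q ^ k.toNat * ih k - qBinomial_succ q n k + e1 - e2

theorem qBinomial_add_two (n : ℕ) (k : ℤ) :
    qBinomial q (n + 2) k = q ^ k.toNat * qBinomial q n k
      + (1 + q ^ (n + 1)) * qBinomial q n (k - 1)
      + q ^ ((n : ℤ) + 2 - k).toNat * qBinomial q n (k - 2) := by
  have e := pow_toNat_mul_pow_toNat_mul_qBinomial q (n := n) (j := k - 1) (a := n + 2 - k)
      (b := k - 1) (by ring) (by omega)
  rw [qBinomial_succ' q (n + 1), qBinomial_succ q n, qBinomial_succ q n]
  push_cast
  rw [show (n : ℤ) + 1 + 1 - k = n + 2 - k by ring, show k - 1 - 1 = k - 2 by ring]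
  linear_combination e

theorem qBinomial_symm (n : ℕ) (k : ℤ) : qBinomial q n (n - k) = qBinomial q n k := by
  induction n generalizing k with
  | zero => simp [qBinomial]
  | succ n ih =>
    rw [qBinomial_succ, qBinomial_succ' q n k]
    push_cast
    rw [show (n : ℤ) + 1 - k - 1 = n - k by ring, ih, show (n : ℤ) + 1 - k = n - (k - 1) by ring,
      ih]
    ring

theorem qPochhammer_mul_qBinomial (n j : ℕ) :
    qPochhammer q j * qBinomial q n j = ∏ i ∈ range j, (1 - q ^ (n - i)) := by
  induction n generalizing j with
  | zero =>
    cases j with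
    | zero => simp [qPochhammer, qBinomial_zero_right]
    | succ j => rw [qBinomial_eq_zero q (by omega), mul_zero, prod_range_succ']; simp
  | succ n ih =>
    cases j with
    | zero => simp [qPochhammer, qBinomial_zero_right]
    | succ j =>
      have hj := ih j
      have hj1 := ih (j + 1)
      rw [qPochhammer, prod_range_succ, ← qPochhammer, prod_range_succ] at hj1
      push_cast at hj1
      rw [qPochhammer, prod_range_succ, ← qPochhammer, qBinomial_succ, prod_range_succ']
      push_cast
      simp only [add_sub_cancel_right]
      rw [show ((j : ℤ) + 1).toNat = j + 1 by omega]
      -- for `j > n` the product has the factor `1 - q ^ (n - n) = 0`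
      have hjn : (∏ i ∈ range j, (1 - q ^ (n - i))) * q ^ (j + 1) * q ^ (n - j)
          = (∏ i ∈ range j, (1 - q ^ (n - i))) * q ^ (n + 1) := by
        rcases le_or_gt j n with h | h
        · rw [mul_assoc, ← pow_add]; congr 2; omega
        · rw [prod_eq_zero (i := n) (by simpa using h) (by simp)]; ring
      linear_combination (1 - q ^ (j + 1)) * hj + q ^ (j + 1) * hj1 - hjn

theorem pow_dvd_qPochhammer_mul_qBinomial_sub_one {n m j : ℕ} (hjm : j ≤ m) (hjn : 2 * j ≤ n) :
    q ^ (j + 1) ∣ qPochhammer q m * qBinomial q n j - 1 := by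
  have factor : ∀ e, j + 1 ≤ e → 1 - q ^ e ≡ 1 [SMOD Ideal.span {q ^ (j + 1)}] := fun e he =>
    SModEq.sub_mem.2 <| Ideal.mem_span_singleton.2 <| by
      simpa using (pow_dvd_pow q he).neg_right
  rw [← Ideal.mem_span_singleton, ← SModEq.sub_mem, qPochhammer, ← prod_range_mul_prod_Ico _ hjm,
    mul_right_comm, ← qPochhammer, qPochhammer_mul_qBinomial]
  simpa using (SModEq.prod fun i hi => factor _ (by simp only [mem_range] at hi; omega)).mul
    (SModEq.prod fun i hi => factor _ (by simp only [mem_Ico] at hi; omega))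

end QBinomial

theorem sum_Icc_succ_comp_add {M : Type*} [AddCommMonoid M] (f : ℤ → M) {m : ℕ} {c : ℤ}
    (hc : c.natAbs ≤ 1) (hf : ∀ k, m < k.natAbs → f k = 0) :
    ∑ k ∈ Icc (-(m + 1 : ℤ)) (m + 1), f (k + c) = ∑ k ∈ Icc (-(m : ℤ)) m, f k := by
  calc ∑ k ∈ Icc (-(m + 1 : ℤ)) (m + 1), f (k + c)
      = ∑ k ∈ Icc (-(m + 1 : ℤ) + c) (m + 1 + c), f k := by
        rw [← map_add_right_Icc, sum_map]; rfl
    _ = ∑ k ∈ Icc (-(m : ℤ)) m, f k := by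
        refine (sum_subset (fun k hk => ?_) fun k _ hk => hf k ?_).symm <;>
          simp only [mem_Icc] at * <;> omega

section FiniteJacobi

variable {A : Type*} [CommRing A] (t : A)

def jacobiCoeff (m : ℕ) (k : ℤ) : A := t ^ (k.natAbs ^ 2) * qBinomial (t ^ 2) (2 * m) (m + k)

theorem jacobiCoeff_eq_zero {m : ℕ} {k : ℤ} (h : m < k.natAbs) : jacobiCoeff t m k = 0 := by
  rw [jacobiCoeff, qBinomial_eq_zero _ (by omega), mul_zero]

theorem jacobiCoeff_succ (m : ℕ) (k : ℤ) :
    jacobiCoeff t (m + 1) k = (1 + t ^ (4 * m + 2)) * jacobiCoeff t m k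
      + t ^ (2 * m + 1) * (jacobiCoeff t m (k - 1) + jacobiCoeff t m (k + 1)) := by
  -- `t^(k²) (t²)^(m + 1 ± k) = t^(2m+1) t^((k ± 1)²)` wherever the Gaussian binomial is nonzero
  have shift : ∀ s e : ℤ, (s = 1 ∨ s = -1) → e = m + 1 + s * k →
      t ^ (k.natAbs ^ 2) * (t ^ 2) ^ e.toNat * qBinomial (t ^ 2) (2 * m) (m + (k + s))
        = t ^ (2 * m + 1) * jacobiCoeff t m (k + s) := by
    intro s e hs he
    rw [jacobiCoeff, ← mul_assoc]
    by_cases hB : 0 ≤ (m : ℤ) + (k + s) ∧ (m : ℤ) + (k + s) ≤ (2 * m : ℕ)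
    · have he0 : 0 ≤ e := by rcases hs with rfl | rfl <;> omega
      rw [← pow_mul, ← pow_add, ← pow_add]
      congr 2
      zify
      rw [Int.toNat_of_nonneg he0, sq_abs, sq_abs, he]
      rcases hs with rfl | rfl <;> ring
    · rw [qBinomial_eq_zero _ (by omega), mul_zero, mul_zero]
  have h1 := shift 1 (m + (k + 1)) (by simp) (by ring)
  have h2 := shift (-1) (2 * m + 2 - (m + (k + 1))) (by simp) (by ring)
  rw [jacobiCoeff, jacobiCoeff, show 2 * (m + 1) = 2 * m + 2 by ring, qBinomial_add_two,
    sub_eq_add_neg k 1, ← pow_mul t 2 (2 * m + 1), show 2 * (2 * m + 1) = 4 * m + 2 by ring]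
  push_cast
  rw [show (m : ℤ) + 1 + k = m + (k + 1) by ring, show (m : ℤ) + (k + 1) - 1 = m + k by ring,
    show (m : ℤ) + (k + 1) - 2 = m + (k + -1) by ring]
  linear_combination h1 + h2

theorem finite_jacobi_triple_product (z : Aˣ) (m : ℕ) :
    (∏ j ∈ range m, (1 + ↑z⁻¹ * t ^ (2 * j + 1))) * ∏ j ∈ range m, (1 + ↑z * t ^ (2 * j + 1))
      = ∑ k ∈ Icc (-(m : ℤ)) m, ↑(z ^ k) * jacobiCoeff t m k := by
  induction m with
  | zero => simp [jacobiCoeff, qBinomial]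
  | succ m ih =>
    set S := ∑ k ∈ Icc (-(m : ℤ)) m, ↑(z ^ k) * jacobiCoeff t m k
    set a := t ^ (2 * m + 1) with ha
    have shift : ∀ c : ℤ, c.natAbs ≤ 1 →
        ∑ k ∈ Icc (-(m + 1 : ℤ)) (m + 1), ↑(z ^ (k + c)) * jacobiCoeff t m (k + c) = S :=
      fun c hc => sum_Icc_succ_comp_add (fun k => ↑(z ^ k) * jacobiCoeff t m k) hc
        fun k hk => by rw [jacobiCoeff_eq_zero t hk, mul_zero]
    have h0 := shift 0 (by simp)
    simp only [add_zero] at h0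
    calc _ = (1 + a ^ 2) * S + (↑z * a) * S + (↑z⁻¹ * a) * S := by
          rw [prod_range_succ, prod_range_succ, mul_mul_mul_comm, ih]
          linear_combination S * a ^ 2 * Units.inv_mul z
      _ = ∑ k ∈ Icc (-(m + 1 : ℤ)) (m + 1), ((1 + a ^ 2) * (↑(z ^ k) * jacobiCoeff t m k)
            + (↑z * a) * (↑(z ^ (k + -1)) * jacobiCoeff t m (k + -1))
            + (↑z⁻¹ * a) * (↑(z ^ (k + 1)) * jacobiCoeff t m (k + 1))) := by
          rw [sum_add_distrib, sum_add_distrib, ← mul_sum, ← mul_sum, ← mul_sum, h0,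
            shift (-1) (by simp), shift 1 (by simp)]
      _ = _ := by
          push_cast
          refine sum_congr rfl fun k _ => ?_
          rw [jacobiCoeff_succ, ← ha, show t ^ (4 * m + 2) = a ^ 2 by ring, zpow_add,
            zpow_add_one, zpow_neg_one, Units.val_mul, Units.val_mul, sub_eq_add_neg k 1]
          linear_combination (a * ↑(z ^ k) * jacobiCoeff t m (k + -1)) * Units.mul_inv z
            + (a * ↑(z ^ k) * jacobiCoeff t m (k + 1)) * Units.inv_mul z

theorem pow_dvd_qPochhammer_mul_jacobiCoeff_sub {m : ℕ} {k : ℤ} (hk : k.natAbs ≤ m) :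
    t ^ (2 * m + 1) ∣ qPochhammer (t ^ 2) m * jacobiCoeff t m k - t ^ (k.natAbs ^ 2) := by
  have hB : qBinomial (t ^ 2) (2 * m) (m + k)
      = qBinomial (t ^ 2) (2 * m) (m - k.natAbs : ℕ) := by
    rcases Int.natAbs_eq k with h | h
    · rw [← qBinomial_symm]; congr 1; push_cast; omega
    · congr 1; omega
  have hd := pow_dvd_qPochhammer_mul_qBinomial_sub_one (t ^ 2) (n := 2 * m) (m := m)
    (j := m - k.natAbs) (by omega) (by omega)
  have hexp : 2 * m + 1 ≤ k.natAbs ^ 2 + 2 * (m - k.natAbs + 1) := by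
    have := two_mul_le_add_sq k.natAbs 1
    omega
  rw [jacobiCoeff, hB, mul_left_comm, ← mul_sub_one]
  exact (pow_dvd_pow t hexp).trans (by rw [pow_add, pow_mul]; exact mul_dvd_mul_left _ hd)

theorem pow_dvd_sum_sub_prod (z : Aˣ) (m : ℕ) :
    t ^ (2 * m + 1) ∣ ∑ k ∈ Icc (-(m : ℤ)) m, ↑(z ^ k) * t ^ (k.natAbs ^ 2)
      - (∏ j ∈ range m, (1 - t ^ (2 * j + 2))) * (∏ j ∈ range m, (1 + ↑z⁻¹ * t ^ (2 * j + 1)))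
        * ∏ j ∈ range m, (1 + ↑z * t ^ (2 * j + 1)) := by
  have hq : ∏ j ∈ range m, (1 - t ^ (2 * j + 2)) = qPochhammer (t ^ 2) m :=
    prod_congr rfl fun j _ => by rw [← pow_mul]; ring_nf
  rw [hq, mul_assoc, finite_jacobi_triple_product, mul_sum, ← sum_sub_distrib]
  refine dvd_sum fun k hk => ?_
  rw [show ↑(z ^ k) * t ^ (k.natAbs ^ 2) - qPochhammer (t ^ 2) m * (↑(z ^ k) * jacobiCoeff t m k)
      = -(↑(z ^ k) * (qPochhammer (t ^ 2) m * jacobiCoeff t m k - t ^ (k.natAbs ^ 2))) by ring]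
  exact (dvd_mul_of_dvd_right
    (pow_dvd_qPochhammer_mul_jacobiCoeff_sub t (by simp only [mem_Icc] at hk; omega)) _).neg_right

end FiniteJacobi

section PowerSeries

open PowerSeries Filter Topology

theorem powerSeriesTopology_eq_withPiTopology {R : Type*} [Semiring R] [TopologicalSpace R] :
    (powerSeriesTopology : TopologicalSpace R⟦X⟧) = WithPiTopology.instTopologicalSpace R := by
  refine le_antisymm ?_ ?_
  · rw [← continuous_id_iff_le]
    refine continuous_pi fun d => ?_
    have hd : (fun f : R⟦X⟧ => id f d) = fun f => coeff (d ()) f := by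
      ext f; rw [coeff, MvPowerSeries.coeff_apply]; congr; ext; simp
    have hcoeff : Continuous fun f : R⟦X⟧ => fun n : ℕ => coeff n f := continuous_induced_dom
    exact hd ▸ (continuous_apply (d ())).comp hcoeff
  · rw [← continuous_id_iff_le, continuous_induced_rng]
    exact @continuous_pi _ _ _ (WithPiTopology.instTopologicalSpace R) _ _
      (WithPiTopology.continuous_coeff R)

variable {R : Type*} [CommRing R]

theorem tendsto_order_atTop_nhds_top_of_X_pow_dvd {f : ℕ → R⟦X⟧} (h : ∀ n, X ^ n ∣ f n) :
    Tendsto (fun n => (f n).order) atTop (𝓝 ⊤) := by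
  refine ENat.tendsto_nhds_top_iff_natCast_lt.2 fun n =>
    eventually_atTop.2 ⟨n + 1, fun i hi => ?_⟩
  refine (Nat.cast_lt.2 (by omega : n < i)).trans_le (nat_le_order _ _ fun j hj => ?_)
  exact X_pow_dvd_iff.1 (h i) j hj

variable [TopologicalSpace R]

instance [IsTopologicalRing R] : IsTopologicalRing R⟦X⟧ := by
  rw [powerSeriesTopology_eq_withPiTopology]; exact WithPiTopology.instIsTopologicalRing R

instance [T2Space R] : T2Space R⟦X⟧ := by
  rw [powerSeriesTopology_eq_withPiTopology]; exact WithPiTopology.instT2Space R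

theorem tendsto_zero_of_X_pow_dvd {ι : Type*} {l : Filter ι} {f : ι → R⟦X⟧}
    (h : ∀ n, ∀ᶠ i in l, X ^ n ∣ f i) : Tendsto f l (𝓝 0) := by
  rw [powerSeriesTopology_eq_withPiTopology, WithPiTopology.tendsto_iff_coeff_tendsto]
  refine fun d => tendsto_const_nhds.congr' ?_
  filter_upwards [h (d + 1)] with i hi
  rw [map_zero, X_pow_dvd_iff.1 hi d (by omega)]

theorem multipliable_one_add_of_X_pow_dvd {f : ℕ → R⟦X⟧} (h : ∀ n, X ^ n ∣ f n) :
    Multipliable fun n => 1 + f n := by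
  rw [powerSeriesTopology_eq_withPiTopology]
  exact WithPiTopology.multipliable_one_add_of_tendsto_order_atTop_nhds_top R
    (tendsto_order_atTop_nhds_top_of_X_pow_dvd h)

theorem summable_of_X_pow_dvd {f : ℕ → R⟦X⟧} (h : ∀ n, X ^ n ∣ f n) : Summable f := by
  rw [powerSeriesTopology_eq_withPiTopology]
  exact WithPiTopology.summable_of_tendsto_order_atTop_nhds_top R
    (tendsto_order_atTop_nhds_top_of_X_pow_dvd h)

theorem jacobi_triple_product_powerSeries [IsTopologicalRing R] [T2Space R] (z : R⟦X⟧ˣ) :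
    ∑' k : ℤ, (z ^ k : R⟦X⟧ˣ) * (X : R⟦X⟧) ^ (k.natAbs ^ 2)
      = (∏' j : ℕ, (1 - (X : R⟦X⟧) ^ (2 * j + 2)))
        * (∏' j : ℕ, (1 + ↑z⁻¹ * (X : R⟦X⟧) ^ (2 * j + 1)))
        * ∏' j : ℕ, (1 + ↑z * (X : R⟦X⟧) ^ (2 * j + 1)) := by
  have hX : ∀ (c : R⟦X⟧) (n e : ℕ), n ≤ e → X ^ n ∣ c * X ^ e :=
    fun c n e h => (pow_dvd_pow X h).mul_left c
  have hθ : Summable fun k : ℤ => (z ^ k : R⟦X⟧ˣ) * (X : R⟦X⟧) ^ (k.natAbs ^ 2) :=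
    .of_nat_of_neg
      (summable_of_X_pow_dvd fun n => hX _ _ _ <| by
        rw [Int.natAbs_natCast]; exact Nat.le_self_pow two_ne_zero n)
      (summable_of_X_pow_dvd fun n => hX _ _ _ <| by
        rw [Int.natAbs_neg, Int.natAbs_natCast]; exact Nat.le_self_pow two_ne_zero n)
  have hA : Multipliable fun j : ℕ => (1 : R⟦X⟧) - X ^ (2 * j + 2) := by
    simpa [sub_eq_add_neg] using
      multipliable_one_add_of_X_pow_dvd fun n => hX (-1) n (2 * n + 2) (by omega)
  have hB := multipliable_one_add_of_X_pow_dvd fun n => hX (↑z⁻¹) n (2 * n + 1) (by omega)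
  have hC := multipliable_one_add_of_X_pow_dvd fun n => hX (↑z) n (2 * n + 1) (by omega)
  have hsum := hθ.hasSum.comp (tendsto_Icc_neg (R := ℤ))
  have hprod := (hA.hasProd.tendsto_prod_nat.mul hB.hasProd.tendsto_prod_nat).mul
    hC.hasProd.tendsto_prod_nat
  have hdiff := tendsto_zero_of_X_pow_dvd (l := atTop) fun n => eventually_atTop.2
    ⟨n, fun m hm => (pow_dvd_pow X (by omega)).trans (pow_dvd_sum_sub_prod X z m)⟩
  exact sub_eq_zero.1 (tendsto_nhds_unique (hsum.sub hprod) hdiff)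

end PowerSeries

instance : DiscreteTopology (LaurentPolynomial ℚ) := ⟨rfl⟩

theorem Xm_add (a b : ℤ) : Xm (a + b) = Xm a * Xm b := by
  rw [Xm, Xm, Xm, ← map_mul, LaurentPolynomial.T_add]

theorem Xm_zero : Xm 0 = 1 := by
  rw [Xm, LaurentPolynomial.T_zero, map_one]

def negXmUnit : RJˣ where
  val := -Xm 1
  inv := -Xm (-1)
  val_inv := by rw [neg_mul_neg, ← Xm_add, add_neg_cancel, Xm_zero]
  inv_val := by rw [neg_mul_neg, ← Xm_add, neg_add_cancel, Xm_zero]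

theorem val_negXmUnit_zpow (k : ℤ) : ((negXmUnit ^ k : RJˣ) : RJ) = (-1 : ℚ) ^ k • Xm k := by
  induction k using Int.induction_on with
  | zero => simp [Xm_zero]
  | succ k ih =>
    rw [zpow_add_one, Units.val_mul, ih, zpow_add_one₀ (by norm_num), Xm_add]
    simp [negXmUnit]
  | pred k ih =>
    rw [zpow_sub_one, Units.val_mul, ih, zpow_sub_one₀ (by norm_num), sub_eq_add_neg, Xm_add]
    simp [negXmUnit]

/-- The Jacobi triple product identity, with `q = t²` so that all exponents are integral:
$\sum_{k\in\mathbb{Z}} (-1)^k t^{k^2} x^k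
  = (t^2;t^2)_\infty\,(t/x;t^2)_\infty\,(tx;t^2)_\infty$. -/
theorem jacobi_triple_product :
    ∑' k : ℤ, ((-1 : ℚ) ^ k • Xm k) * (PowerSeries.X : RJ) ^ (k.natAbs ^ 2) =
      (∏' j : ℕ, (1 - (PowerSeries.X : RJ) ^ (2 * j + 2))) *
        (∏' j : ℕ, (1 - Xm (-1) * (PowerSeries.X : RJ) ^ (2 * j + 1))) *
        (∏' j : ℕ, (1 - Xm 1 * (PowerSeries.X : RJ) ^ (2 * j + 1))) := by
  have h := jacobi_triple_product_powerSeries negXmUnit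
  simp only [val_negXmUnit_zpow] at h
  simpa [negXmUnit, ← sub_eq_add_neg] using h
end
end

section
/- Slater's identity (83) holds: (q;q)_\infty \sum_{n=0}^{\infty} \frac{q^{2n^2}}{(q;q)_{2n}} = (q;q^8)_\infty (q^7;q^8)_\infty (q^8;q^8)_\infty (q^6;q^{16})_\infty (q^{10};q^{16})_\infty, as formal power series in q. -/
noncomputable section

/-- The $q$-Pochhammer symbol $(a;q)_n = \prod_{j=1}^{n}(1 - a q^{j-1})$. -/
def qPoch {R : Type*} [CommRing R] (a q : R) (n : ℕ) : R :=
  ∏ k ∈ Finset.range n, (1 - a * q ^ k)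

local notation "Q" => (PowerSeries.X : PowerSeries ℚ)

/-!
Substitute `x ↦ x²`, which is injective on power series. The sum becomes
`∑ x^(4n²) / (x²;x²)_{2n}`, the even part of Euler's series
`∑ ε^m x^(m²) / (x²;x²)_m = (-εx; x²)_∞`, hence equal to `((-x;x²)_∞ + (x;x²)_∞) / 2`.
After multiplication by `(x⁴;x⁴)_∞`, the Jacobi triple product turns `(-εx;x²)_∞` into the
theta series `∑_j ε^j x^(2j²+j)`; averaging over `ε = ±1` keeps the terms with even `j`, that is
`∑_l x^(8l²+2l)`, which the triple product again writes as
`(x¹⁶;x¹⁶)_∞ (-x⁶;x¹⁶)_∞ (-x¹⁰;x¹⁶)_∞`. What remains is an identity between infinite products,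
obtained by splitting and pairing factors and from Euler's `(-x;x)_∞ (x;x²)_∞ = 1`.

Euler's identity and the triple product are limits of the `q`-binomial theorem and of its
two-sided analogue for Gaussian binomials, which hold in every commutative ring; the limits are
exchanged with the sums by Tannery's theorem for the `X`-adic topology.
-/

open PowerSeries Filter Topology Finset

namespace PowerSeries

variable {R : Type*}

section Topology

variable [Semiring R] [TopologicalSpace R]

theorem continuous_coeff (n : ℕ) : Continuous (coeff n : R⟦X⟧ → R) :=
  (continuous_apply n).comp (continuous_induced_dom (f := fun (f : R⟦X⟧) (n : ℕ) => coeff n f))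

theorem continuous_constantCoeff : Continuous (constantCoeff : R⟦X⟧ → R) := by
  rw [← coeff_zero_eq_constantCoeff]; exact continuous_coeff 0

/-- Mathlib's theory of `PowerSeries.WithPiTopology` is transferred through this equality. -/
theorem powerSeriesTopology_eq_withPiTopology :
    (powerSeriesTopology : TopologicalSpace R⟦X⟧) = WithPiTopology.instTopologicalSpace R := by
  apply le_antisymm
  · refine continuous_id_iff_le.1 (continuous_pi fun d => ?_)
    rw [show d = Finsupp.single () (d ()) by ext; simp]
    exact continuous_coeff (d ())
  · let := WithPiTopology.instTopologicalSpace R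
    exact continuous_iff_le_induced.1 (continuous_pi (WithPiTopology.continuous_coeff R))

instance [T2Space R] : T2Space R⟦X⟧ := by
  rw [powerSeriesTopology_eq_withPiTopology]; exact WithPiTopology.instT2Space R

theorem tendsto_iff_coeff_tendsto {ι : Type*} {l : Filter ι} {f : ι → R⟦X⟧} {g : R⟦X⟧} :
    Tendsto f l (𝓝 g) ↔ ∀ d, Tendsto (fun i => coeff d (f i)) l (𝓝 (coeff d g)) := by
  rw [powerSeriesTopology_eq_withPiTopology]
  exact WithPiTopology.tendsto_iff_coeff_tendsto R f l g

theorem summable_of_X_pow_dvd {ι : Type*} {f : ι → R⟦X⟧}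
    (h : ∀ n, ∃ s : Finset ι, ∀ i ∉ s, X ^ n ∣ f i) : Summable f := by
  rw [powerSeriesTopology_eq_withPiTopology, WithPiTopology.summable_iff_summable_coeff]
  intro d
  obtain ⟨s, hs⟩ := h (d + 1)
  exact summable_of_ne_finset_zero fun i hi => X_pow_dvd_iff.1 (hs i hi) d d.lt_succ_self

theorem coeff_tsum_of_X_pow_dvd [T2Space R] {ι : Type*} {f : ι → R⟦X⟧} (hf : Summable f)
    {s : Finset ι} {d : ℕ} (hs : ∀ i ∉ s, X ^ (d + 1) ∣ f i) :
    coeff d (∑' i, f i) = ∑ i ∈ s, coeff d (f i) := by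
  rw [hf.map_tsum (coeff d) (continuous_coeff d)]
  exact tsum_eq_sum fun i hi => X_pow_dvd_iff.1 (hs i hi) d d.lt_succ_self

end Topology

instance [Ring R] [TopologicalSpace R] [IsTopologicalRing R] : IsTopologicalRing R⟦X⟧ := by
  rw [powerSeriesTopology_eq_withPiTopology]; exact WithPiTopology.instIsTopologicalRing R

theorem multipliable_one_add_of_X_pow_dvd [CommSemiring R] [TopologicalSpace R] {f : ℕ → R⟦X⟧}
    (h : ∀ n, ∀ᶠ k in atTop, X ^ n ∣ f k) : Multipliable (fun k => 1 + f k) := by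
  rw [powerSeriesTopology_eq_withPiTopology]
  refine WithPiTopology.multipliable_one_add_of_tendsto_order_atTop_nhds_top R
    (ENat.tendsto_nhds_top_iff_natCast_lt.2 fun n => (h (n + 1)).mono fun k hk => ?_)
  exact (ENat.natCast_lt_natCast.2 n.lt_succ_self).trans_le
    (nat_le_order _ _ (X_pow_dvd_iff.1 hk))

/-- Tannery's theorem for the `X`-adic topology. -/
theorem hasSum_of_tendsto_tsum [Ring R] [TopologicalSpace R] [T2Space R] {ι : Type*}
    {F : ℕ → ι → R⟦X⟧} {G : ι → R⟦X⟧} {L : R⟦X⟧}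
    (hlim : ∀ i n, ∀ᶠ N in atTop, X ^ n ∣ F N i - G i)
    (hsmall : ∀ n, ∃ s : Finset ι, ∀ N, ∀ i ∉ s, X ^ n ∣ F N i)
    (hL : Tendsto (fun N => ∑' i, F N i) atTop (𝓝 L)) : HasSum G L := by
  have hsmallG (n : ℕ) :
      ∃ s : Finset ι, (∀ N, ∀ i ∉ s, X ^ n ∣ F N i) ∧ ∀ i ∉ s, X ^ n ∣ G i := by
    obtain ⟨s, hs⟩ := hsmall n
    refine ⟨s, hs, fun i hi => ?_⟩
    obtain ⟨N, hN⟩ := (hlim i n).exists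
    simpa using dvd_sub (hs N i hi) hN
  have hG : Summable G := summable_of_X_pow_dvd fun n => (hsmallG n).imp fun _ hs => hs.2
  suffices Tendsto (fun N => ∑' i, F N i) atTop (𝓝 (∑' i, G i)) from
    tendsto_nhds_unique this hL ▸ hG.hasSum
  refine tendsto_iff_coeff_tendsto.2 fun d => tendsto_nhds_of_eventually_eq ?_
  obtain ⟨s, hsF, hsG⟩ := hsmallG (d + 1)
  filter_upwards [(eventually_all_finset s).2 fun i _ => hlim i (d + 1)] with N hN
  rw [coeff_tsum_of_X_pow_dvd (summable_of_X_pow_dvd fun n => (hsmall n).imp fun _ hs => hs N)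
    (hsF N), coeff_tsum_of_X_pow_dvd hG hsG]
  refine sum_congr rfl fun i hi => ?_
  simpa [sub_eq_zero] using X_pow_dvd_iff.1 (hN i hi) d d.lt_succ_self

theorem multipliable_one_add_mul_pow [CommRing R] [TopologicalSpace R] {s : R⟦X⟧}
    (hs : X ∣ s) (w : R⟦X⟧) : Multipliable fun k => 1 + w * s ^ (2 * k + 1) :=
  multipliable_one_add_of_X_pow_dvd fun n => (eventually_ge_atTop n).mono fun k hk =>
    dvd_mul_of_dvd_right ((pow_dvd_pow X (by omega)).trans (pow_dvd_pow_of_dvd hs _)) w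

section Expand

variable [CommRing R]

theorem continuous_expand [TopologicalSpace R] (p : ℕ) (hp : p ≠ 0) :
    Continuous (expand p hp : R⟦X⟧ → R⟦X⟧) := by
  refine continuous_induced_rng.2 (continuous_pi fun n => ?_)
  simp only [Function.comp_def, coeff_expand]
  split_ifs
  exacts [continuous_coeff _, continuous_const]

theorem expand_injective (p : ℕ) (hp : p ≠ 0) :
    Function.Injective (expand p hp : R⟦X⟧ → R⟦X⟧) := fun f g h => by
  ext n
  rw [← coeff_expand_mul p hp f, h, coeff_expand_mul]

end Expand

theorem expand_inv {K : Type*} [Field K] (p : ℕ) (hp : p ≠ 0) {f : K⟦X⟧}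
    (hf : constantCoeff f ≠ 0) : expand p hp f⁻¹ = (expand p hp f)⁻¹ := by
  rw [PowerSeries.eq_inv_iff_mul_eq_one (by rwa [constantCoeff_expand]), ← map_mul,
    PowerSeries.inv_mul_cancel _ hf, map_one]

end PowerSeries

theorem dvd_prod_one_sub_sub_one {R ι : Type*} [CommRing R] {d : R} (s : Finset ι) {f : ι → R}
    (h : ∀ t ∈ s, d ∣ f t) : d ∣ ∏ t ∈ s, (1 - f t) - 1 := by
  classical
  induction s using Finset.induction_on with
  | empty => simp
  | insert a s ha ih =>
    rw [prod_insert ha]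
    have := dvd_sub (ih fun t ht => h t (mem_insert_of_mem ht))
      (dvd_mul_of_dvd_left (h a (mem_insert_self a s)) (∏ t ∈ s, (1 - f t)))
    convert this using 1
    ring

section GaussBinom

variable {R : Type*} [CommRing R]

/-- The Gaussian binomial coefficient `[n, m]_q`, defined by the `q`-Pascal rule, so that no
division is needed. -/
def gaussBinom (q : R) : ℕ → ℕ → R
  | _, 0 => 1
  | 0, _ + 1 => 0
  | n + 1, m + 1 => gaussBinom q n m + q ^ (m + 1) * gaussBinom q n (m + 1)

@[simp]
theorem gaussBinom_zero_right (q : R) (n : ℕ) : gaussBinom q n 0 = 1 := by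
  cases n <;> rfl

theorem gaussBinom_succ_succ (q : R) (n m : ℕ) :
    gaussBinom q (n + 1) (m + 1) = gaussBinom q n m + q ^ (m + 1) * gaussBinom q n (m + 1) :=
  rfl

theorem gaussBinom_eq_zero_of_lt (q : R) {n m : ℕ} (h : n < m) : gaussBinom q n m = 0 := by
  induction n generalizing m with
  | zero => obtain ⟨m, rfl⟩ := Nat.exists_eq_succ_of_ne_zero h.ne'; rfl
  | succ n ih =>
    obtain ⟨m, rfl⟩ := Nat.exists_eq_succ_of_ne_zero (Nat.ne_zero_of_lt h)
    rw [gaussBinom_succ_succ, ih (by omega), ih (by omega), mul_zero, add_zero]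

theorem qPoch_mul_gaussBinom (q : R) (n m : ℕ) :
    qPoch q q m * gaussBinom q n m = ∏ t ∈ range m, (1 - q ^ (n - t)) := by
  induction n generalizing m with
  | zero =>
    cases m with
    | zero => simp [qPoch]
    | succ m => rw [prod_range_succ', Nat.zero_sub, pow_zero, sub_self, mul_zero,
        gaussBinom_eq_zero_of_lt q m.succ_pos, mul_zero]
  | succ n ih =>
    cases m with
    | zero => simp [qPoch]
    | succ m =>
      have hpoch : qPoch q q (m + 1) = qPoch q q m * (1 - q ^ (m + 1)) := by
        rw [qPoch, prod_range_succ, ← pow_succ']; rfl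
      have hnum : ∏ t ∈ range (m + 1), (1 - q ^ (n + 1 - t)) =
          (∏ t ∈ range m, (1 - q ^ (n - t))) * (1 - q ^ (n + 1)) := by
        rw [prod_range_succ']; simp
      rw [gaussBinom_succ_succ, mul_add, mul_left_comm, ih (m + 1), hpoch, mul_right_comm, ih m,
        hnum, prod_range_succ]
      rcases le_or_gt m n with hmn | hnm
      · rw [show n + 1 = (m + 1) + (n - m) by omega, pow_add]; ring
      · rw [prod_eq_zero (mem_range.2 hnm) (by simp)]; ring

theorem prod_one_add_mul_pow_eq_sum_gaussBinom (w s : R) (M : ℕ) :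
    ∏ k ∈ range M, (1 + w * s ^ (2 * k + 1)) =
      ∑ i ∈ range (M + 1), w ^ i * s ^ (i ^ 2) * gaussBinom (s ^ 2) M i := by
  induction M generalizing w with
  | zero => simp
  | succ M ih =>
    set b : ℕ → R := fun j => (w * s ^ 2) ^ j * s ^ (j ^ 2) * gaussBinom (s ^ 2) M j
    have hshift : ∏ k ∈ range (M + 1), (1 + w * s ^ (2 * k + 1)) =
        (∏ k ∈ range M, (1 + w * s ^ 2 * s ^ (2 * k + 1))) * (1 + w * s) := by
      rw [prod_range_succ']
      congr 1
      · exact prod_congr rfl fun k _ => by ring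
      · ring
    have hb : ∑ i ∈ range (M + 1), b (i + 1) + 1 = ∑ i ∈ range (M + 1), b i := by
      have h0 : b 0 = 1 := by simp [b]
      have htop : b (M + 1) = 0 := by simp [b, gaussBinom_eq_zero_of_lt _ M.lt_succ_self]
      rw [← h0, ← sum_range_succ', sum_range_succ, htop, add_zero]
    calc ∏ k ∈ range (M + 1), (1 + w * s ^ (2 * k + 1))
        = (∑ j ∈ range (M + 1), b j) * (1 + w * s) := by rw [hshift, ih]
      _ = ∑ i ∈ range (M + 1), (w * s * b i + b (i + 1)) + 1 := by
        rw [sum_add_distrib, ← mul_sum, add_assoc, hb]; ring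
      _ = _ := by
        rw [sum_range_succ' _ (M + 1)]
        simp only [gaussBinom_zero_right, pow_zero, zero_pow two_ne_zero, mul_one]
        refine congrArg (· + 1) (sum_congr rfl fun i _ => ?_)
        simp only [b, gaussBinom_succ_succ]
        ring

theorem finite_jacobi_triple_product_s10 (w s : R) (M N : ℕ) :
    (∏ k ∈ range M, (1 + w * s ^ (2 * k + 1))) * ∏ k ∈ range N, (w + s ^ (2 * k + 1)) =
      ∑ i ∈ range (M + N + 1),
        w ^ i * s ^ (((i : ℤ) - N).natAbs ^ 2) * gaussBinom (s ^ 2) (M + N) i := by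
  induction N with
  | zero => simp [prod_one_add_mul_pow_eq_sum_gaussBinom]
  | succ N ih =>
    set f : ℕ → R := fun i =>
      w ^ i * s ^ (((i : ℤ) - N).natAbs ^ 2) * gaussBinom (s ^ 2) (M + N) i
    have hshift (i : ℕ) : (((i + 1 : ℕ) : ℤ) - (N + 1 : ℕ)).natAbs = ((i : ℤ) - N).natAbs := by
      congr 1; push_cast; ring
    have hexp (i : ℕ) : ((i : ℤ) - N).natAbs ^ 2 + 2 * (i + 1) =
        2 * N + 1 + (((i + 1 : ℕ) : ℤ) - N).natAbs ^ 2 := by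
      zify; simp only [sq_abs]; ring
    have hterm (i : ℕ) : w ^ (i + 1) * s ^ ((((i + 1 : ℕ) : ℤ) - (N + 1 : ℕ)).natAbs ^ 2) *
        gaussBinom (s ^ 2) (M + N + 1) (i + 1) = w * f i + s ^ (2 * N + 1) * f (i + 1) := by
      have hs : s ^ (2 * N + 1) * s ^ ((((i + 1 : ℕ) : ℤ) - N).natAbs ^ 2) =
          s ^ (((i : ℤ) - N).natAbs ^ 2) * (s ^ 2) ^ (i + 1) := by
        rw [← pow_mul, ← pow_add, ← pow_add, hexp]
      simp only [f, gaussBinom_succ_succ, hshift]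
      linear_combination (-w ^ (i + 1) * gaussBinom (s ^ 2) (M + N) (i + 1)) * hs
    have h0 : f 0 * s ^ (2 * N + 1) = w ^ 0 * s ^ ((((0 : ℕ) : ℤ) - (N + 1 : ℕ)).natAbs ^ 2) *
        gaussBinom (s ^ 2) (M + N + 1) 0 := by
      have hexp0 : (((0 : ℕ) : ℤ) - (N + 1 : ℕ)).natAbs ^ 2 =
          (((0 : ℕ) : ℤ) - N).natAbs ^ 2 + (2 * N + 1) := by
        zify; simp only [sq_abs]; ring
      simp only [f, hexp0, pow_add, gaussBinom_zero_right, pow_zero, one_mul, mul_one]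
    have hsum : ∑ i ∈ range (M + N + 1), f (i + 1) + f 0 = ∑ i ∈ range (M + N + 1), f i := by
      have htop : f (M + N + 1) = 0 := by
        simp [f, gaussBinom_eq_zero_of_lt _ (M + N).lt_succ_self]
      rw [← sum_range_succ', sum_range_succ, htop, add_zero]
    rw [prod_range_succ, ← mul_assoc, ih, show M + (N + 1) = M + N + 1 by ring,
      sum_range_succ' _ (M + N + 1), sum_congr rfl fun i _ => hterm i, sum_add_distrib, ← mul_sum,
      ← mul_sum, ← hsum, ← h0]
    ring

theorem pow_dvd_qPoch_mul_gaussBinom_sub_one {d q : R} (hq : d ∣ q)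
    {k m n : ℕ} (h : k + m ≤ n + 1) : d ^ k ∣ qPoch q q m * gaussBinom q n m - 1 := by
  rw [qPoch_mul_gaussBinom]
  refine dvd_prod_one_sub_sub_one _ fun t ht => ?_
  have := mem_range.1 ht
  exact (pow_dvd_pow d (by omega)).trans (pow_dvd_pow_of_dvd hq _)

theorem pow_dvd_qPoch_mul_gaussBinom_top_sub_one {d q : R} (hq : d ∣ q)
    {k m n : ℕ} (hmn : m ≤ n) (hkm : k ≤ m + 1) (hkn : k + m ≤ n + 1) :
    d ^ k ∣ qPoch q q n * gaussBinom q n m - 1 := by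
  have hsplit : qPoch q q n = qPoch q q m * ∏ t ∈ range (n - m), (1 - q * q ^ (m + t)) := by
    rw [qPoch, qPoch, ← prod_range_add, Nat.add_sub_cancel' hmn]
  have htail : d ^ k ∣ ∏ t ∈ range (n - m), (1 - q * q ^ (m + t)) - 1 :=
    dvd_prod_one_sub_sub_one _ fun t _ => by
      rw [← pow_succ']
      exact (pow_dvd_pow d (by omega)).trans (pow_dvd_pow_of_dvd hq _)
  have := dvd_add (dvd_mul_of_dvd_left (pow_dvd_qPoch_mul_gaussBinom_sub_one hq hkn)
    (∏ t ∈ range (n - m), (1 - q * q ^ (m + t)))) htail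
  convert this using 1
  rw [hsplit]
  ring

theorem constantCoeff_qPoch {q : R⟦X⟧} (hq : constantCoeff q = 0) (n : ℕ) :
    constantCoeff (qPoch q q n) = 1 := by
  simp [qPoch, map_prod, hq]

theorem expand_qPoch_X (n : ℕ) :
    expand 2 two_ne_zero (qPoch (X : R⟦X⟧) X n) = qPoch (X ^ 2) (X ^ 2) n := by
  simp [qPoch, map_prod]

end GaussBinom

section Pochhammer

variable {R : Type*} [CommRing R] [TopologicalSpace R]

/-- `pochInf c a m` is $(c x^a; x^m)_\infty$. -/
def pochInf (c : R) (a m : ℕ) : R⟦X⟧ :=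
  ∏' k, (1 - C c * X ^ (a + m * k))

theorem pochInf_one_eq_tprod (a m : ℕ) :
    pochInf (1 : R) a m = ∏' k, (1 - X ^ (m * k + a)) := by
  simp [pochInf, add_comm]

theorem hasProd_pochInf (c : R) (a : ℕ) {m : ℕ} (hm : 0 < m) :
    HasProd (fun k => 1 - C c * X ^ (a + m * k)) (pochInf c a m) := by
  refine Multipliable.hasProd ?_
  simp_rw [sub_eq_add_neg]
  refine multipliable_one_add_of_X_pow_dvd fun n => (eventually_ge_atTop n).mono fun k hk => ?_
  exact (dvd_mul_of_dvd_right (pow_dvd_pow X (by nlinarith)) _).neg_right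

theorem tendsto_qPoch_X_pow {m : ℕ} (hm : 0 < m) :
    Tendsto (fun n => qPoch (X ^ m : R⟦X⟧) (X ^ m) n) atTop (𝓝 (pochInf 1 m m)) := by
  convert (hasProd_pochInf (1 : R) m hm).tendsto_prod_nat using 2 with n
  simp [qPoch, pow_add, pow_mul]

variable [T2Space R]

theorem expand_pochInf (p : ℕ) (hp : p ≠ 0) (c : R) (a : ℕ) {m : ℕ} (hm : 0 < m) :
    expand p hp (pochInf c a m) = pochInf c (p * a) (p * m) := by
  refine ((hasProd_pochInf c a hm).map (expand p hp) (continuous_expand p hp)).unique ?_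
  convert hasProd_pochInf c (p * a) (Nat.mul_pos (Nat.pos_of_ne_zero hp) hm) using 2 with k
  simp only [Function.comp_apply, map_sub, map_one, map_mul, expand_C, map_pow, expand_X,
    ← pow_mul, sub_right_inj]
  ring_nf

theorem constantCoeff_pochInf (c : R) {a m : ℕ} (ha : 0 < a) (hm : 0 < m) :
    constantCoeff (pochInf c a m) = 1 := by
  refine ((hasProd_pochInf c a hm).map constantCoeff continuous_constantCoeff).unique ?_
  convert hasProd_one using 2 with k
  simp [zero_pow (by positivity : a + m * k ≠ 0)]

theorem pochInf_ne_zero [Nontrivial R] (c : R) {a m : ℕ} (ha : 0 < a) (hm : 0 < m) :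
    pochInf c a m ≠ 0 := fun h => by
  simpa [h] using constantCoeff_pochInf c ha hm

variable [IsTopologicalRing R]

theorem pochInf_eq_mul (c : R) (a : ℕ) {m : ℕ} (hm : 0 < m) :
    pochInf c a m = pochInf c a (2 * m) * pochInf c (a + m) (2 * m) := by
  refine (hasProd_pochInf c a hm).unique (HasProd.even_mul_odd ?_ ?_)
  · convert hasProd_pochInf c a (by omega : 0 < 2 * m) using 4; ring
  · convert hasProd_pochInf c (a + m) (by omega : 0 < 2 * m) using 4; ring

theorem pochInf_mul_pochInf_neg (c : R) (a : ℕ) {m : ℕ} (hm : 0 < m) :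
    pochInf c a m * pochInf (-c) a m = pochInf (c ^ 2) (2 * a) (2 * m) := by
  refine ((hasProd_pochInf c a hm).mul (hasProd_pochInf (-c) a hm)).unique ?_
  convert hasProd_pochInf (c ^ 2) (2 * a) (by omega : 0 < 2 * m) using 2 with k
  rw [show 2 * a + 2 * m * k = (a + m * k) + (a + m * k) by ring, pow_add, map_neg, map_pow]
  ring

theorem pochInf_neg_one_mul_pochInf_one [IsDomain R] {a : ℕ} (ha : 0 < a) :
    pochInf (-1 : R) a a * pochInf 1 a (2 * a) = 1 := by
  have hsplit := pochInf_eq_mul (1 : R) a ha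
  have hpair := pochInf_mul_pochInf_neg (1 : R) a ha
  rw [one_pow] at hpair
  rw [show a + a = 2 * a by ring] at hsplit
  refine mul_left_cancel₀
    (pochInf_ne_zero (1 : R) (a := 2 * a) (m := 2 * a) (by omega) (by omega)) ?_
  calc pochInf (1 : R) (2 * a) (2 * a) * (pochInf (-1) a a * pochInf 1 a (2 * a))
      = pochInf 1 a a * pochInf (-1) a a := by rw [hsplit]; ring
    _ = pochInf 1 (2 * a) (2 * a) * 1 := by rw [hpair, mul_one]

end Pochhammer

section Euler

variable {K : Type*} [Field K] [TopologicalSpace K] [T2Space K]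

theorem hasSum_euler {s : K⟦X⟧} (hs : X ∣ s) (w : K⟦X⟧) :
    HasSum (fun m => w ^ m * s ^ (m ^ 2) * (qPoch (s ^ 2) (s ^ 2) m)⁻¹)
      (∏' k, (1 + w * s ^ (2 * k + 1))) := by
  have hXq : X ∣ s ^ 2 := hs.trans (dvd_pow_self s two_ne_zero)
  have hq : constantCoeff (s ^ 2) = 0 := by
    obtain ⟨t, ht⟩ := hXq; simp [ht]
  refine hasSum_of_tendsto_tsum (F := fun N m => w ^ m * s ^ (m ^ 2) * gaussBinom (s ^ 2) N m)
    (fun m n => ?_) (fun n => ⟨range n, fun N m hm => ?_⟩) ?_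
  · filter_upwards [eventually_ge_atTop (n + m)] with N hN
    set P := qPoch (s ^ 2) (s ^ 2) m
    have hP : P⁻¹ * P = 1 := PowerSeries.inv_mul_cancel _ (by simp [P, constantCoeff_qPoch hq])
    have hdiff : w ^ m * s ^ (m ^ 2) * gaussBinom (s ^ 2) N m - w ^ m * s ^ (m ^ 2) * P⁻¹ =
        w ^ m * s ^ (m ^ 2) * P⁻¹ * (P * gaussBinom (s ^ 2) N m - 1) := by
      linear_combination (-(w ^ m * s ^ (m ^ 2) * gaussBinom (s ^ 2) N m)) * hP
    rw [hdiff]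
    exact dvd_mul_of_dvd_right (pow_dvd_qPoch_mul_gaussBinom_sub_one hXq (by omega)) _
  · have hnm : n ≤ m ^ 2 :=
      (not_lt.1 (mt mem_range.2 hm)).trans (Nat.le_self_pow two_ne_zero m)
    exact dvd_mul_of_dvd_left (dvd_mul_of_dvd_right
      ((pow_dvd_pow X hnm).trans (pow_dvd_pow_of_dvd hs _)) _) _
  · have hpartial (N : ℕ) : ∑' m, w ^ m * s ^ (m ^ 2) * gaussBinom (s ^ 2) N m =
        ∏ k ∈ range N, (1 + w * s ^ (2 * k + 1)) := by
      rw [prod_one_add_mul_pow_eq_sum_gaussBinom]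
      refine tsum_eq_sum fun m hm => ?_
      rw [gaussBinom_eq_zero_of_lt _ (by simpa using hm), mul_zero]
    simp_rw [hpartial]
    exact (multipliable_one_add_mul_pow hs w).hasProd.tendsto_prod_nat

end Euler

theorem thetaExponent_nonneg {b a : ℕ} (hab : a ≤ b) (j : ℤ) : 0 ≤ (b : ℤ) * j ^ 2 + a * j := by
  have : (a : ℤ) ≤ b := by exact_mod_cast hab
  rcases le_or_gt 0 j with hj | hj
  · positivity
  · nlinarith [mul_nonpos_of_nonneg_of_nonpos (Int.natCast_nonneg b) (by omega : j + 1 ≤ 0)]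

theorem natAbs_le_thetaExponent {b a : ℕ} (hab : a < b) (j : ℤ) :
    (j.natAbs : ℤ) ≤ (b : ℤ) * j ^ 2 + a * j := by
  have : (a : ℤ) + 1 ≤ b := by exact_mod_cast hab
  rcases le_or_gt 0 j with hj | hj
  · rw [Int.natAbs_of_nonneg hj]
    nlinarith [Int.le_self_sq j, mul_nonneg (Int.natCast_nonneg a) hj]
  · rw [Int.ofNat_natAbs_of_nonpos hj.le]
    nlinarith [mul_nonpos_of_nonneg_of_nonpos (Int.natCast_nonneg b) (by omega : j + 1 ≤ 0)]

section Jacobi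

variable {K : Type*} [Field K]

theorem C_mul_X_pow_pow_mul_X_pow {b a : ℕ} (hab : a ≤ b) {z : K} (hz : z ≠ 0) (i N : ℕ) :
    (C z * X ^ a) ^ i * (X ^ b) ^ (((i : ℤ) - N).natAbs ^ 2) =
      (C z * X ^ a) ^ N *
        (C (z ^ ((i : ℤ) - N)) * X ^ ((b : ℤ) * ((i : ℤ) - N) ^ 2 + a * ((i : ℤ) - N)).toNat) := by
  have hz' : z ^ i = z ^ N * z ^ ((i : ℤ) - N) := by
    rw [← zpow_natCast, ← zpow_natCast, ← zpow_add₀ hz]; ring_nf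
  have hexp : a * i + b * ((i : ℤ) - N).natAbs ^ 2 =
      a * N + ((b : ℤ) * ((i : ℤ) - N) ^ 2 + a * ((i : ℤ) - N)).toNat := by
    zify
    rw [Int.toNat_of_nonneg (thetaExponent_nonneg hab _), sq_abs]
    ring
  have hX : (X : K⟦X⟧) ^ (a * i) * X ^ (b * ((i : ℤ) - N).natAbs ^ 2) =
      X ^ (a * N) * X ^ ((b : ℤ) * ((i : ℤ) - N) ^ 2 + a * ((i : ℤ) - N)).toNat := by
    rw [← pow_add, ← pow_add, hexp]
  simp only [mul_pow, ← map_pow, ← pow_mul, hz', map_mul]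
  linear_combination (C (z ^ N) * C (z ^ ((i : ℤ) - N))) * hX

theorem finite_jacobi_triple_product_X_pow {b a : ℕ} (hab : a ≤ b) {z : K} (hz : z ≠ 0) (N : ℕ) :
    (∏ k ∈ range N, (1 - C (-z) * X ^ (b + a + 2 * b * k))) *
        ∏ k ∈ range N, (1 - C (-z⁻¹) * X ^ (b - a + 2 * b * k)) =
      ∑ j ∈ Icc (-N : ℤ) N, C (z ^ j) * X ^ ((b : ℤ) * j ^ 2 + a * j).toNat *
        gaussBinom (X ^ (2 * b)) (2 * N) (j + N).toNat := by
  have hw : C z * X ^ a ≠ (0 : K⟦X⟧) := mul_ne_zero (by simpa using hz) (pow_ne_zero _ X_ne_zero)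
  have hA (k : ℕ) : 1 + C z * X ^ a * (X ^ b) ^ (2 * k + 1) =
      1 - C (-z) * X ^ (b + a + 2 * b * k) := by
    rw [map_neg, neg_mul, sub_neg_eq_add, mul_assoc, ← pow_mul, ← pow_add]; ring_nf
  have hB (k : ℕ) : C z * X ^ a + (X ^ b) ^ (2 * k + 1) =
      C z * X ^ a * (1 - C (-z⁻¹) * X ^ (b - a + 2 * b * k)) := by
    have hzz : C z * C z⁻¹ = (1 : K⟦X⟧) := by rw [← map_mul, mul_inv_cancel₀ hz, map_one]
    have hX : ((X : K⟦X⟧) ^ b) ^ (2 * k + 1) = X ^ a * X ^ (b - a + 2 * b * k) := by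
      rw [← pow_mul, ← pow_add]; congr 1; zify [hab]; ring
    rw [hX, map_neg]
    linear_combination (-(X ^ a * X ^ (b - a + 2 * b * k))) * hzz
  have h := finite_jacobi_triple_product_s10 (C z * X ^ a) (X ^ b) N N
  rw [prod_congr rfl fun k _ => hA k, prod_congr rfl fun k _ => hB k, prod_mul_distrib,
    prod_const, card_range] at h
  apply mul_left_cancel₀ (pow_ne_zero N hw)
  rw [mul_left_comm, h, mul_sum, ← two_mul, ← pow_mul, mul_comm b 2]
  refine sum_nbij' (fun i => (i : ℤ) - N) (fun j => (j + N).toNat) ?_ ?_ ?_ ?_ ?_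
  · intro i hi; rw [mem_range] at hi; rw [mem_Icc]; omega
  · intro j hj; rw [mem_Icc] at hj; rw [mem_range]; omega
  · intro i _; omega
  · intro j hj; rw [mem_Icc] at hj; omega
  · intro i _
    rw [C_mul_X_pow_pow_mul_X_pow hab hz, show ((i : ℤ) - N + N).toNat = i by omega]
    ring

/-- `(q;q)_{2N}` times the `j`-th term of the finite triple product identity, `q = x^(2b)`;
the identity runs over `-N ≤ j ≤ N`. -/
def jacobiTerm (b a : ℕ) (z : K) (N : ℕ) (j : ℤ) : K⟦X⟧ :=
  if -(N : ℤ) ≤ j then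
    C (z ^ j) * X ^ ((b : ℤ) * j ^ 2 + a * j).toNat *
      (qPoch (X ^ (2 * b)) (X ^ (2 * b)) (2 * N) * gaussBinom (X ^ (2 * b)) (2 * N) (j + N).toNat)
  else 0

variable [TopologicalSpace K]

theorem tsum_jacobiTerm {b a : ℕ} (hab : a ≤ b) {z : K} (hz : z ≠ 0) (N : ℕ) :
    ∑' j, jacobiTerm b a z N j = qPoch (X ^ (2 * b)) (X ^ (2 * b)) (2 * N) *
      ((∏ k ∈ range N, (1 - C (-z) * X ^ (b + a + 2 * b * k))) *
        ∏ k ∈ range N, (1 - C (-z⁻¹) * X ^ (b - a + 2 * b * k))) := by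
  rw [finite_jacobi_triple_product_X_pow hab hz, mul_sum,
    tsum_eq_sum (s := Icc (-(N : ℤ)) N) fun j hj => ?_]
  · refine sum_congr rfl fun j hj => ?_
    rw [mem_Icc] at hj
    simp only [jacobiTerm, if_pos hj.1]
    ring
  · rw [mem_Icc] at hj
    simp only [jacobiTerm]
    split_ifs
    · rw [gaussBinom_eq_zero_of_lt _ (by omega), mul_zero, mul_zero]
    · rfl

variable [IsTopologicalRing K] [T2Space K]

theorem hasSum_jacobi_triple_product {b a : ℕ} (hab : a < b) {z : K} (hz : z ≠ 0) :
    HasSum (fun j : ℤ => C (z ^ j) * X ^ ((b : ℤ) * j ^ 2 + a * j).toNat)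
      (pochInf 1 (2 * b) (2 * b) * pochInf (-z) (b + a) (2 * b) *
        pochInf (-z⁻¹) (b - a) (2 * b)) := by
  have hb : 0 < 2 * b := by omega
  refine hasSum_of_tendsto_tsum (F := jacobiTerm b a z) (fun j n => ?_)
    (fun n => ⟨Icc (-(n : ℤ)) n, fun N j hj => ?_⟩) ?_
  · filter_upwards [eventually_ge_atTop (n + j.natAbs)] with N hN
    have hd : (X : K⟦X⟧) ^ n ∣ qPoch (X ^ (2 * b)) (X ^ (2 * b)) (2 * N) *
        gaussBinom (X ^ (2 * b)) (2 * N) (j + N).toNat - 1 :=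
      pow_dvd_qPoch_mul_gaussBinom_top_sub_one (k := n) (m := (j + N).toNat) (n := 2 * N)
        (dvd_pow_self X hb.ne') (by omega) (by omega) (by omega)
    simp only [jacobiTerm, if_pos (show -(N : ℤ) ≤ j by omega), ← mul_sub_one]
    exact dvd_mul_of_dvd_right hd _
  · simp only [jacobiTerm]
    split_ifs
    · have hn : n ≤ ((b : ℤ) * j ^ 2 + a * j).toNat := by
        have := natAbs_le_thetaExponent hab j
        rw [mem_Icc] at hj
        omega
      exact dvd_mul_of_dvd_left (dvd_mul_of_dvd_right (pow_dvd_pow X hn) _) _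
    · exact dvd_zero _
  · simp_rw [tsum_jacobiTerm hab.le hz, ← mul_assoc]
    refine (((tendsto_qPoch_X_pow hb).comp (tendsto_atTop_mono
      (fun N => Nat.le_mul_of_pos_left N two_pos) tendsto_id)).mul
      (hasProd_pochInf (-z) (b + a) hb).tendsto_prod_nat).mul
      (hasProd_pochInf (-z⁻¹) (b - a) hb).tendsto_prod_nat

end Jacobi

theorem hasSum_euler_X (ε : ℚ) :
    HasSum (fun m => C ε ^ m * X ^ (m ^ 2) * (qPoch (X ^ 2) (X ^ 2) m)⁻¹) (pochInf (-ε) 1 2) := by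
  convert hasSum_euler (dvd_refl X) (C ε) using 1
  simp only [pochInf, map_neg, neg_mul, sub_neg_eq_add]
  ring_nf

def slaterSeries : ℚ⟦X⟧ :=
  ∑' n : ℕ, X ^ (2 * n ^ 2) * (qPoch X X (2 * n))⁻¹

theorem hasSum_expand_two_slaterSeries :
    HasSum (fun n => X ^ ((2 * n) ^ 2) * (qPoch (X ^ 2) (X ^ 2) (2 * n))⁻¹)
      (expand 2 two_ne_zero slaterSeries) := by
  have hsum : Summable fun n : ℕ => (X : ℚ⟦X⟧) ^ (2 * n ^ 2) * (qPoch X X (2 * n))⁻¹ :=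
    summable_of_X_pow_dvd fun k => ⟨range k, fun n hn => dvd_mul_of_dvd_left (pow_dvd_pow X
      ((not_lt.1 (mt mem_range.2 hn)).trans (by nlinarith))) _⟩
  rw [slaterSeries]
  convert hsum.hasSum.map (expand 2 two_ne_zero) (continuous_expand 2 two_ne_zero) using 2 with n
  rw [Function.comp_apply, map_mul, expand_inv _ _ (by simp [constantCoeff_qPoch]), expand_qPoch_X,
    map_pow, expand_X, ← pow_mul]
  ring_nf

theorem pochInf_add_pochInf_eq_two_mul_expand :
    pochInf (-1 : ℚ) 1 2 + pochInf 1 1 2 =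
      2 * expand 2 two_ne_zero slaterSeries := by
  have h := (hasSum_euler_X 1).add (hasSum_euler_X (-1))
  rw [neg_neg, ← (mul_right_injective₀ (two_ne_zero' ℕ)).hasSum_iff] at h
  · refine h.unique ((hasSum_expand_two_slaterSeries.mul_left 2).congr_fun fun n => ?_)
    simp only [Function.comp_apply, map_one, one_pow, ← map_pow, (even_two_mul n).neg_one_pow]
    ring
  · intro m hm
    have hodd : Odd m := Nat.not_even_iff_odd.1 fun ⟨k, hk⟩ => hm ⟨k, by show 2 * k = m; omega⟩
    simp [hodd.neg_one_pow]

theorem pochInf_mul_add_eq_two_mul :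
    pochInf (1 : ℚ) 4 4 * (pochInf (-1) 1 2 + pochInf 1 1 2) =
      2 * (pochInf 1 16 16 * pochInf (-1) 10 16 * pochInf (-1) 6 16) := by
  have h := (hasSum_jacobi_triple_product (K := ℚ) (b := 2) (a := 1) one_lt_two one_ne_zero).add
    (hasSum_jacobi_triple_product (K := ℚ) (b := 2) (a := 1) one_lt_two
      (neg_ne_zero.2 one_ne_zero))
  rw [← (mul_right_injective₀ (two_ne_zero' ℤ)).hasSum_iff] at h
  · have h8 := (hasSum_jacobi_triple_product (K := ℚ) (b := 8) (a := 2) (by norm_num)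
      one_ne_zero).mul_left 2
    have := h.unique (h8.congr_fun fun l => ?_)
    · rw [pochInf_eq_mul (-1 : ℚ) 1 two_pos, pochInf_eq_mul (1 : ℚ) 1 two_pos]
      norm_num only at this
      linear_combination this
    · simp only [Function.comp_apply, one_zpow, map_one, one_mul, (even_two_mul l).neg_one_zpow]
      rw [show ((2 : ℕ) : ℤ) * (2 * l) ^ 2 + ((1 : ℕ) : ℤ) * (2 * l) =
          (8 : ℕ) * l ^ 2 + (2 : ℕ) * l by push_cast; ring]
      ring
  · intro j hj
    have hodd : Odd j := Int.not_even_iff_odd.1 fun ⟨k, hk⟩ => hj ⟨k, by show 2 * k = j; omega⟩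
    simp [hodd.neg_one_zpow]

theorem pochInf_mul_expand_slaterSeries :
    pochInf (1 : ℚ) 4 4 *
        expand 2 two_ne_zero slaterSeries =
      pochInf 1 16 16 * pochInf (-1) 10 16 * pochInf (-1) 6 16 := by
  have h := pochInf_mul_add_eq_two_mul
  rw [pochInf_add_pochInf_eq_two_mul_expand] at h
  have h2 : (2 : ℚ⟦X⟧) ≠ 0 := fun h => by
    simpa [map_ofNat] using congrArg (constantCoeff (R := ℚ)) h
  exact mul_left_cancel₀ h2 (by linear_combination h)

/-- With `q = x²` this reads `(-q;q)_∞ (q;q⁸)_∞ (q⁷;q⁸)_∞ (q⁶;q¹⁶)_∞ (q¹⁰;q¹⁶)_∞ =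
(-q³;q⁸)_∞ (-q⁵;q⁸)_∞`, after cancelling `(q⁸;q⁸)_∞`; it reduces to `(-q;q)_∞ (q;q²)_∞ = 1`. -/
theorem slater_83_product_identity :
    pochInf (-1 : ℚ) 2 2 * (pochInf 1 2 16 * pochInf 1 14 16 * pochInf 1 16 16 *
        pochInf 1 12 32 * pochInf 1 20 32) =
      pochInf 1 16 16 * pochInf (-1) 10 16 * pochInf (-1) 6 16 := by
  have h6 : pochInf (1 : ℚ) 6 16 * pochInf (-1) 6 16 = pochInf 1 12 32 := by
    simpa using pochInf_mul_pochInf_neg (1 : ℚ) 6 (m := 16) (by norm_num)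
  have h10 : pochInf (1 : ℚ) 10 16 * pochInf (-1) 10 16 = pochInf 1 20 32 := by
    simpa using pochInf_mul_pochInf_neg (1 : ℚ) 10 (m := 16) (by norm_num)
  have h24 : pochInf (1 : ℚ) 2 4 = pochInf 1 2 16 * pochInf 1 10 16 * pochInf 1 6 16 *
      pochInf 1 14 16 := by
    rw [pochInf_eq_mul (1 : ℚ) 2 (m := 4) (by norm_num), pochInf_eq_mul (1 : ℚ) 2 (m := 2 * 4)
      (by norm_num), pochInf_eq_mul (1 : ℚ) (2 + 4) (m := 2 * 4) (by norm_num)]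
    norm_num only
    ring
  have heuler := pochInf_neg_one_mul_pochInf_one (R := ℚ) (a := 2) two_pos
  rw [h24] at heuler
  rw [← h6, ← h10]
  linear_combination (pochInf 1 16 16 * pochInf (-1) 10 16 * pochInf (-1) 6 16) * heuler

/-- Slater's identity (83):
$(q;q)_\infty \sum_{n\ge0} \frac{q^{2n^2}}{(q;q)_{2n}}
 = (q;q^8)_\infty (q^7;q^8)_\infty (q^8;q^8)_\infty (q^6;q^{16})_\infty (q^{10};q^{16})_\infty$,
as formal power series in `q`. -/
theorem slater_83 :
    (∏' k : ℕ, (1 - Q ^ (k + 1))) *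
        ∑' n : ℕ, Q ^ (2 * n ^ 2) * (qPoch Q Q (2 * n))⁻¹ =
      (∏' k : ℕ, (1 - Q ^ (8 * k + 1))) * (∏' k : ℕ, (1 - Q ^ (8 * k + 7))) *
        (∏' k : ℕ, (1 - Q ^ (8 * k + 8))) * (∏' k : ℕ, (1 - Q ^ (16 * k + 6))) *
        (∏' k : ℕ, (1 - Q ^ (16 * k + 10))) := by
  have hprod : ∏' k : ℕ, (1 - Q ^ (k + 1)) = pochInf 1 1 1 := by simp [pochInf_one_eq_tprod]
  rw [hprod, ← pochInf_one_eq_tprod 1 8, ← pochInf_one_eq_tprod 7 8, ← pochInf_one_eq_tprod 8 8,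
    ← pochInf_one_eq_tprod 6 16, ← pochInf_one_eq_tprod 10 16]
  change pochInf 1 1 1 * slaterSeries = _
  refine expand_injective 2 two_ne_zero ?_
  simp only [map_mul, expand_pochInf 2 two_ne_zero (1 : ℚ) _ one_pos,
    expand_pochInf 2 two_ne_zero (1 : ℚ) _ (by norm_num : 0 < 8),
    expand_pochInf 2 two_ne_zero (1 : ℚ) _ (by norm_num : 0 < 16)]
  norm_num only
  refine mul_left_cancel₀ (pochInf_ne_zero (-1 : ℚ) (a := 2) (m := 2) two_pos two_pos) ?_
  have hpair : pochInf (1 : ℚ) 2 2 * pochInf (-1) 2 2 = pochInf 1 4 4 := by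
    simpa using pochInf_mul_pochInf_neg (1 : ℚ) 2 two_pos
  rw [slater_83_product_identity, ← pochInf_mul_expand_slaterSeries, ← hpair]
  ring
end
end
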